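/- arXiv:2110.08889 — 2 statements merged into one kernel-verified Lean document; each statement's English description precedes it below -/
import Mathlib

section
/- For any rotation matrix R in SO(3), with Υ(R) = vex(P_a(R)) and ||R||_I = (1/4)Tr(I₃ - R), the identity ||Υ(R)||² = 4(1 - ||R||_I)||R||_I holds. -/
open Matrix Real

noncomputable def skew (a : Fin 3 → ℝ) : Matrix (Fin 3) (Fin 3) ℝ :=
  !![0, -a 2, a 1; a 2, 0, -a 0; -a 1, a 0, 0]

noncomputable def Pa (M : Matrix (Fin 3) (Fin 3) ℝ) : Matrix (Fin 3) (Fin 3) ℝ :=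
  (1/2 : ℝ) • (M - Mᵀ)

/-- inverse of the skew map (on skew-symmetric matrices) -/
noncomputable def vex (M : Matrix (Fin 3) (Fin 3) ℝ) : Fin 3 → ℝ :=
  ![M 2 1, M 0 2, M 1 0]

noncomputable def Ups (M : Matrix (Fin 3) (Fin 3) ℝ) : Fin 3 → ℝ := vex (Pa M)

noncomputable def normI (M : Matrix (Fin 3) (Fin 3) ℝ) : ℝ :=
  (1/4) * Matrix.trace (1 - M)

def SO3 (R : Matrix (Fin 3) (Fin 3) ℝ) : Prop := Rᵀ * R = 1 ∧ R.det = 1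

theorem stmt0 (R : Matrix (Fin 3) (Fin 3) ℝ) (hR : SO3 R) :
    ∑ i, (Ups R i) ^ 2 = 4 * (1 - normI R) * normI R := by
  obtain ⟨h1, h2⟩ := hR
  have hRRT : R * Rᵀ = 1 := mul_eq_one_comm.mp h1
  have hadj : R.adjugate = Rᵀ := by
    calc R.adjugate = 1 * R.adjugate := (one_mul _).symm
    _ = Rᵀ * (R * R.adjugate) := by rw [← h1, Matrix.mul_assoc]
    _ = Rᵀ := by rw [Matrix.mul_adjugate, h2, one_smul, mul_one]
  have n0 := congrFun (congrFun hRRT 0) 0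
  have n1 := congrFun (congrFun hRRT 1) 1
  have n2 := congrFun (congrFun hRRT 2) 2
  have a0 := congrFun (congrFun hadj 0) 0
  have a1 := congrFun (congrFun hadj 1) 1
  have a2 := congrFun (congrFun hadj 2) 2
  simp [Matrix.mul_apply, Fin.sum_univ_three, Matrix.one_apply, Matrix.transpose_apply,
    Matrix.adjugate_fin_three] at n0 n1 n2 a0 a1 a2
  simp [Ups, vex, Pa, normI, Matrix.trace, Matrix.diag, Fin.sum_univ_three,
    Matrix.transpose_apply, Matrix.sub_apply, Matrix.one_apply, Matrix.smul_apply]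
  linear_combination (n0 + n1 + n2)/4 + (a0 + a1 + a2)/2
end

section
/- Let R̃ : ℝ → SO(3) satisfy R̃̇ = R̃[Ω]_× - [Ω]_× R̃ - R̃[C]_×. Then d/dt ||R̃||_I = -(1/2) Υ(R̃)ᵀ C, where ||R̃||_I = (1/4)Tr(I₃ - R̃) and Υ(R̃) = vex(P_a(R̃)). -/
open Matrix Real

theorem Matrix.hasDerivAt_trace {𝕜 n : Type*} [NontriviallyNormedField 𝕜] [Fintype n]
    {M : 𝕜 → Matrix n n 𝕜} {M' : Matrix n n 𝕜} {t : 𝕜}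
    (hM : ∀ i j, HasDerivAt (fun s => M s i j) (M' i j) t) :
    HasDerivAt (fun s => (M s).trace) M'.trace t :=
  HasDerivAt.fun_sum fun i _ => hM i i

theorem hasDerivAt_normI {M : ℝ → Matrix (Fin 3) (Fin 3) ℝ} {M' : Matrix (Fin 3) (Fin 3) ℝ}
    {t : ℝ} (hM : ∀ i j, HasDerivAt (fun s => M s i j) (M' i j) t) :
    HasDerivAt (fun s => normI (M s)) (-(1/4) * M'.trace) t := by
  have hderiv :=
    ((Matrix.hasDerivAt_trace hM).const_sub (trace (1 : Matrix (Fin 3) (Fin 3) ℝ))).const_mul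
      (1/4 : ℝ)
  simpa only [normI, trace_sub, neg_mul, mul_neg] using hderiv

theorem Matrix.trace_mul_sub_mul_comm {n R : Type*} [Fintype n] [CommRing R]
    (A B : Matrix n n R) : (A * B - B * A).trace = 0 := by
  rw [trace_sub, trace_mul_comm, sub_self]

theorem trace_mul_skew (A : Matrix (Fin 3) (Fin 3) ℝ) (a : Fin 3 → ℝ) :
    (A * skew a).trace = -2 * ∑ i, Ups A i * a i := by
  simp only [trace, diag_apply, Matrix.mul_apply, Fin.sum_univ_three, skew, of_apply, cons_val',
    cons_val_fin_one, cons_val_zero, cons_val_one, cons_val, Ups, vex, Pa, Matrix.smul_apply,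
    Matrix.sub_apply, transpose_apply, smul_eq_mul]
  ring

theorem stmt5_general (Rt : ℝ → Matrix (Fin 3) (Fin 3) ℝ) (Ω C : ℝ → Fin 3 → ℝ)
    (hR : ∀ t i j, HasDerivAt (fun s => Rt s i j)
      ((Rt t * skew (Ω t) - skew (Ω t) * Rt t - Rt t * skew (C t)) i j) t) :
    ∀ t, HasDerivAt (fun s => normI (Rt s))
      (-(1/2) * ∑ i, Ups (Rt t) i * C t i) t := by
  intro t
  convert hasDerivAt_normI (hR t) using 1
  rw [trace_sub, trace_mul_sub_mul_comm, trace_mul_skew]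
  ring

theorem stmt5 (Rt : ℝ → Matrix (Fin 3) (Fin 3) ℝ) (Ω C : ℝ → Fin 3 → ℝ)
    (hSO : ∀ t, SO3 (Rt t))
    (hR : ∀ t i j, HasDerivAt (fun s => Rt s i j)
      ((Rt t * skew (Ω t) - skew (Ω t) * Rt t - Rt t * skew (C t)) i j) t) :
    ∀ t, HasDerivAt (fun s => normI (Rt s))
      (-(1/2) * ∑ i, Ups (Rt t) i * C t i) t :=
  stmt5_general Rt Ω C hR
end
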